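/- arXiv:2110.14308 — 10 statements merged into one kernel-verified Lean document; each statement's English description precedes it below -/
import Mathlib

section
/- If Eve has a winning strategy in the 2-token game G_2(A) on a quantitative automaton A, then for every k ≥ 1 she has a winning strategy in the k-token game G_k(A). Moreover, if her G_2 strategy uses memory of size m and A has n states, then her G_k strategy can be implemented with memory of size n^{k−1}·m^k. -/
/-- A (total) nondeterministic quantitative automaton with alphabet `α`,
states `Q` and weights `W`. -/
structure QAut (α Q W : Type) where
  init : Q
  trans : Set (Q × α × W × Q)
  total : ∀ q a, ∃ x q', (q, a, x, q') ∈ trans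

namespace QAut

variable {α Q W : Type} (A : QAut α Q W)

/-- The state reached after `n` transitions of `τ`, starting from `q`. -/
def stateAt (q : Q) (τ : ℕ → W × Q) : ℕ → Q
  | 0 => q
  | n + 1 => (τ n).2

/-- `τ` is a legal infinite run of `A` from `q` over word `w`. -/
def RunFrom (q : Q) (w : ℕ → α) (τ : ℕ → W × Q) : Prop :=
  ∀ n, (stateAt q τ n, w n, (τ n).1, (τ n).2) ∈ A.trans

/-- `τ` is a legal infinite run of `A` (from the initial state) over word `w`. -/
def RunOn (w : ℕ → α) (τ : ℕ → W × Q) : Prop := A.RunFrom A.init w τ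

/-- The value of automaton `A` on word `w`: the supremum of the values of all runs. -/
noncomputable def wordVal (Val : (ℕ → W) → ℝ) (w : ℕ → α) : ℝ :=
  sSup { v | ∃ τ, A.RunOn w τ ∧ v = Val (fun n => (τ n).1) }

/-- A round of the `k`-token game: the letter played by Adam, Eve's transition,
and Adam's `k` transitions. -/
abbrev GkRound (α Q W : Type) (k : ℕ) := α × (W × Q) × (Fin k → W × Q)

/-- A strategy of Eve in the `k`-token game: given the history of rounds so far
and the current letter, pick a transition. -/
abbrev GkStrat (α Q W : Type) (k : ℕ) := List (GkRound α Q W k) → α → W × Q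

/-- A play of the `k`-token game is consistent with Eve's strategy `s`. -/
def GkConsistent {k : ℕ} (s : GkStrat α Q W k) (π : ℕ → GkRound α Q W k) : Prop :=
  ∀ n, (π n).2.1 = s ((List.range n).map π) (π n).1

/-- Eve's strategy `s` is winning in the `k`-token game with winning condition `good`
(comparing Eve's weight sequence with Adam's `k` weight sequences): on every
consistent play in which Adam's `k` tokens trace legal runs, Eve's token traces
a legal run and the condition `good` holds. -/
def GkWinning (k : ℕ) (good : (ℕ → W) → (Fin k → ℕ → W) → Prop)
    (s : GkStrat α Q W k) : Prop :=
  ∀ π : ℕ → GkRound α Q W k, GkConsistent s π →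
    (∀ j, A.RunOn (fun n => (π n).1) (fun n => (π n).2.2 j)) →
    A.RunOn (fun n => (π n).1) (fun n => (π n).2.1) ∧
      good (fun n => ((π n).2.1).1) (fun j n => ((π n).2.2 j).1)

/-- Eve wins the `k`-token game `G_k(A)` with winning condition `good`. -/
def EveWinsGk (k : ℕ) (good : (ℕ → W) → (Fin k → ℕ → W) → Prop) : Prop :=
  ∃ s, A.GkWinning k good s

/-- The value-comparison winning condition of token games for value function `Val`:
Eve's run's value is at least the maximum of the values of Adam's runs. -/
def goodVal (Val : (ℕ → W) → ℝ) {k : ℕ} (ve : ℕ → W) (va : Fin k → ℕ → W) : Prop :=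
  ∀ j, Val (va j) ≤ Val ve

/-- A round of the letter game: the letter played by Adam and Eve's transition. -/
abbrev LRound (α Q W : Type) := α × (W × Q)

/-- A strategy of Eve in the letter game. -/
abbrev LStrat (α Q W : Type) := List (LRound α Q W) → α → W × Q

/-- A play of the letter game is consistent with Eve's strategy `s`. -/
def LConsistent (s : LStrat α Q W) (π : ℕ → LRound α Q W) : Prop :=
  ∀ n, (π n).2 = s ((List.range n).map π) (π n).1

/-- `s` is winning for Eve in the letter game with winning condition `good`
(a predicate of the word and Eve's weight sequence). -/
def LetterWinning (good : (ℕ → α) → (ℕ → W) → Prop) (s : LStrat α Q W) : Prop :=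
  ∀ π : ℕ → LRound α Q W, LConsistent s π →
    A.RunOn (fun n => (π n).1) (fun n => (π n).2) ∧
      good (fun n => (π n).1) (fun n => ((π n).2).1)

/-- `s` witnesses history-determinism: it wins the letter game, where Eve wins a
play iff the value of her run is at least the value of the word. -/
def HDWinning (Val : (ℕ → W) → ℝ) (s : LStrat α Q W) : Prop :=
  A.LetterWinning (fun w ve => A.wordVal Val w ≤ Val ve) s

/-- `A` is history-deterministic for value function `Val`: Eve wins the letter game. -/
def HD (Val : (ℕ → W) → ℝ) : Prop := ∃ s, A.HDWinning Val s

/-- A round of the `k`-runs letter game: a letter and Eve's `k` transitions. -/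
abbrev KRound (α Q W : Type) (k : ℕ) := α × (Fin k → W × Q)

/-- `A` is `k`-history-deterministic: Eve wins the `k`-runs letter game, in which
she moves `k` tokens and wins if the maximum of her runs' values equals the
value of the word. -/
noncomputable def kHD (k : ℕ) (Val : (ℕ → W) → ℝ) : Prop :=
  ∃ s : List (KRound α Q W k) → α → Fin k → W × Q,
    ∀ π : ℕ → KRound α Q W k,
      (∀ n, (π n).2 = s ((List.range n).map π) (π n).1) →
      (∀ j, A.RunOn (fun n => (π n).1) (fun n => (π n).2 j)) ∧
        (⨆ j, Val (fun n => ((π n).2 j).1)) = A.wordVal Val (fun n => (π n).1)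

/-- `h` is a legal finite run prefix of `A` from state `q`. -/
def FinRun (A : QAut α Q W) : Q → List (LRound α Q W) → Prop
  | _, [] => True
  | q, (a, xq) :: t => (q, a, xq.1, xq.2) ∈ A.trans ∧ FinRun A xq.2 t

/-- The state at the end of a finite run prefix starting from `q`. -/
def endSt : Q → List (LRound α Q W) → Q
  | q, [] => q
  | _, (_, xq) :: t => endSt xq.2 t

/-- The infinite weight sequence obtained by following the finite prefix `pre`
and then the infinite sequence `f`. -/
def splice (pre : List W) (f : ℕ → W) : ℕ → W := fun n =>
  if h : n < pre.length then pre.get ⟨n, h⟩ else f (n - pre.length)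

/-- The move `t` of Eve, on letter `σ` after history `h`, is non-cautious:
there is a continuation word `u` (starting with `σ`) and a run `π'` on it from the
current state whose value (together with the prefix) strictly exceeds the value of
every run on `u` starting with `t`. -/
def NonCautious (Val : (ℕ → W) → ℝ) (h : List (LRound α Q W)) (σ : α) (t : W × Q) : Prop :=
  ∃ u : ℕ → α, u 0 = σ ∧ ∃ π', A.RunFrom (endSt A.init h) u π' ∧
    ∀ π, A.RunFrom (endSt A.init h) u π → π 0 = t →
      Val (splice (h.map (fun r => r.2.1)) (fun n => (π n).1)) <
        Val (splice (h.map (fun r => r.2.1)) (fun n => (π' n).1))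

/-- A finite history is consistent with Eve's letter-game strategy `s`. -/
def HistConsistent (s : LStrat α Q W) (h : List (LRound α Q W)) : Prop :=
  ∀ n (hn : n < h.length), (h.get ⟨n, hn⟩).2 = s (h.take n) (h.get ⟨n, hn⟩).1

/-- Eve's letter-game strategy `s` is cautious: it never makes a non-cautious move
(along histories that arise when playing `s`). -/
def Cautious (Val : (ℕ → W) → ℝ) (s : LStrat α Q W) : Prop :=
  ∀ h, A.FinRun A.init h → HistConsistent s h →
    ∀ σ, ¬ A.NonCautious Val h σ (s h σ)

end QAut

/-- A `k`-token game strategy `s` can be implemented with memory of size `N`: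
there is a memory structure with at most `N` states, updated by the rounds of
the play, such that `s`'s choice depends only on the memory state and the
current letter. -/
def GkStratMemory {α Q W : Type} {k : ℕ} (s : QAut.GkStrat α Q W k) (N : ℕ) : Prop :=
  ∃ (M : Type) (i : Fintype M) (m0 : M) (upd : M → QAut.GkRound α Q W k → M)
    (out : M → α → W × Q),
    @Fintype.card M i ≤ N ∧ ∀ h a, s h a = out (h.foldl upd m0) a

/-! The `k`-token strategy is built by induction on `k`. The `G_{k-1}` strategy plays a virtual
token against Adam's first `k - 1` tokens; the `G_2` strategy then moves Eve's real token against
that virtual token and Adam's last token. Chaining the two winning conditions shows that Eve's run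
is worth at least as much as each of Adam's runs. The virtual token's moves are determined by the
memory of the `G_{k-1}` strategy, so only the two memories have to be stored, which already gives
the bound `m ^ k`. -/

open Function

def prefixFold {M R : Type*} (f : M → R → M) (x₀ : M) (π : ℕ → R) (n : ℕ) : M :=
  ((List.range n).map π).foldl f x₀

section PrefixFold

variable {M N R S : Type*} (f : M → R → M) (x₀ : M) (π : ℕ → R)

theorem prefixFold_succ (n : ℕ) :
    prefixFold f x₀ π (n + 1) = f (prefixFold f x₀ π n) (π n) := by
  simp only [prefixFold, List.range_succ, List.map_append, List.foldl_append, List.map_cons,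
    List.map_nil, List.foldl_cons, List.foldl_nil]

theorem prefixFold_semiconj (g : N → S → N) (p : M → N) (t : M → R → S)
    (h : ∀ x r, p (f x r) = g (p x) (t x r)) (n : ℕ) :
    prefixFold g (p x₀) (fun i => t (prefixFold f x₀ π i) (π i)) n = p (prefixFold f x₀ π n) := by
  induction n with
  | zero => rfl
  | succ n ih => rw [prefixFold_succ, prefixFold_succ, ih, h]

end PrefixFold

theorem GkStratMemory.mono {α Q W : Type} {k : ℕ} {s : QAut.GkStrat α Q W k} {N N' : ℕ}
    (hs : GkStratMemory s N) (hN : N ≤ N') : GkStratMemory s N' := by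
  obtain ⟨M, i, m₀, upd, out, hcard, hout⟩ := hs
  exact ⟨M, i, m₀, upd, out, hcard.trans hN, hout⟩

namespace QAut

structure GkMachine (α Q W : Type) (k : ℕ) where
  Mem : Type
  start : Mem
  update : Mem → GkRound α Q W k → Mem
  move : Mem → α → W × Q

namespace GkMachine

variable {α Q W : Type} {k l a b : ℕ}

def strat (𝓜 : GkMachine α Q W k) : GkStrat α Q W k :=
  fun h σ => 𝓜.move (h.foldl 𝓜.update 𝓜.start) σ

theorem gkConsistent_strat_iff (𝓜 : GkMachine α Q W k) (π : ℕ → GkRound α Q W k) :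
    GkConsistent 𝓜.strat π ↔
      ∀ n, (π n).2.1 = 𝓜.move (prefixFold 𝓜.update 𝓜.start π n) (π n).1 :=
  Iff.rfl

theorem gkStratMemory_strat (𝓜 : GkMachine α Q W k) [Finite 𝓜.Mem] :
    GkStratMemory 𝓜.strat (Nat.card 𝓜.Mem) := by
  let := Fintype.ofFinite 𝓜.Mem
  exact ⟨𝓜.Mem, inferInstance, 𝓜.start, 𝓜.update, 𝓜.move, (Nat.card_eq_fintype_card).ge,
    fun _ _ => rfl⟩

theorem _root_.GkStratMemory.exists_gkMachine {s : GkStrat α Q W k} {N : ℕ}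
    (hs : GkStratMemory s N) :
    ∃ 𝓜 : GkMachine α Q W k, Finite 𝓜.Mem ∧ Nat.card 𝓜.Mem ≤ N ∧ 𝓜.strat = s := by
  obtain ⟨M, i, m₀, upd, out, hcard, hout⟩ := hs
  refine ⟨⟨M, m₀, upd, out⟩, inferInstance, ?_, funext₂ fun h σ => (hout h σ).symm⟩
  rwa [← @Nat.card_eq_fintype_card M i] at hcard

def reindexRound (g : Fin l → Fin k) (r : GkRound α Q W k) : GkRound α Q W l :=
  (r.1, r.2.1, r.2.2 ∘ g)

/-- Plays the `l`-token machine `𝓜` against Adam's tokens `g 0, …, g (l - 1)`. -/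
def comap (g : Fin l → Fin k) (𝓜 : GkMachine α Q W l) : GkMachine α Q W k where
  Mem := 𝓜.Mem
  start := 𝓜.start
  update x r := 𝓜.update x (reindexRound g r)
  move := 𝓜.move

def virtualRound (𝓜 : GkMachine α Q W a) (x : 𝓜.Mem) (r : GkRound α Q W (a + b)) :
    GkRound α Q W a :=
  (r.1, 𝓜.move x r.1, fun j => r.2.2 (Fin.castAdd b j))

def pairRound (𝓜 : GkMachine α Q W a) (x : 𝓜.Mem) (r : GkRound α Q W (a + b)) :
    GkRound α Q W (b + 1) :=
  (r.1, r.2.1, Fin.cons (𝓜.move x r.1) fun j => r.2.2 (Fin.natAdd a j))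

/-- `𝓜` moves a virtual token against Adam's first `a` tokens, and `𝓝` moves Eve's token
against the virtual token and Adam's last `b` tokens. -/
def compose (𝓜 : GkMachine α Q W a) (𝓝 : GkMachine α Q W (b + 1)) :
    GkMachine α Q W (a + b) where
  Mem := 𝓜.Mem × 𝓝.Mem
  start := (𝓜.start, 𝓝.start)
  update x r := (𝓜.update x.1 (virtualRound 𝓜 x.1 r), 𝓝.update x.2 (pairRound 𝓜 x.1 r))
  move x := 𝓝.move x.2

variable (A : QAut α Q W) (Val : (ℕ → W) → ℝ)

theorem gkWinning_comap {g : Fin l → Fin k} (hg : Surjective g) {𝓜 : GkMachine α Q W l}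
    (h𝓜 : A.GkWinning l (goodVal Val) 𝓜.strat) :
    A.GkWinning k (goodVal Val) (𝓜.comap g).strat := by
  intro π hπ hruns
  have hcons : GkConsistent 𝓜.strat fun n => reindexRound g (π n) := by
    have hmem := prefixFold_semiconj (𝓜.comap g).update 𝓜.start π 𝓜.update id _ fun _ _ => rfl
    exact (gkConsistent_strat_iff _ _).2 fun n => (hmem n).symm ▸ hπ n
  obtain ⟨hrun, hgood⟩ := h𝓜 _ hcons fun j => hruns (g j)
  refine ⟨hrun, fun j => ?_⟩
  obtain ⟨i, rfl⟩ := hg j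
  exact hgood i

theorem gkWinning_compose {𝓜 : GkMachine α Q W a} {𝓝 : GkMachine α Q W (b + 1)}
    (h𝓜 : A.GkWinning a (goodVal Val) 𝓜.strat) (h𝓝 : A.GkWinning (b + 1) (goodVal Val) 𝓝.strat) :
    A.GkWinning (a + b) (goodVal Val) (𝓜.compose 𝓝).strat := by
  intro π hπ hruns
  let x : ℕ → 𝓜.Mem × 𝓝.Mem := prefixFold (𝓜.compose 𝓝).update (𝓜.compose 𝓝).start π
  have hvirtual : GkConsistent 𝓜.strat fun n => virtualRound 𝓜 (x n).1 (π n) := by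
    have hmem := prefixFold_semiconj (𝓜.compose 𝓝).update (𝓜.compose 𝓝).start π 𝓜.update
      Prod.fst _ fun _ _ => rfl
    exact (gkConsistent_strat_iff _ _).2 fun n => (hmem n).symm ▸ rfl
  obtain ⟨hvrun, hvgood⟩ := h𝓜 _ hvirtual fun j => hruns (Fin.castAdd b j)
  have hpair : GkConsistent 𝓝.strat fun n => pairRound 𝓜 (x n).1 (π n) := by
    have hmem := prefixFold_semiconj (𝓜.compose 𝓝).update (𝓜.compose 𝓝).start π 𝓝.update
      Prod.snd _ fun _ _ => rfl
    exact (gkConsistent_strat_iff _ _).2 fun n => (hmem n).symm ▸ hπ n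
  obtain ⟨hrun, hgood⟩ := h𝓝 _ hpair (Fin.cases hvrun fun j => hruns (Fin.natAdd a j))
  exact ⟨hrun, Fin.addCases (fun j => (hvgood j).trans (hgood 0)) fun j => hgood j.succ⟩

theorem exists_gkMachine_winning {𝓝 : GkMachine α Q W 2} [Finite 𝓝.Mem]
    (h𝓝 : A.GkWinning 2 (goodVal Val) 𝓝.strat) (k : ℕ) (hk : 1 ≤ k) :
    ∃ 𝓜 : GkMachine α Q W k, Finite 𝓜.Mem ∧ Nat.card 𝓜.Mem ≤ Nat.card 𝓝.Mem ^ k ∧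
      A.GkWinning k (goodVal Val) 𝓜.strat := by
  induction k, hk using Nat.le_induction with
  | base =>
    refine ⟨𝓝.comap fun _ => 0, ‹_›, (pow_one _).ge, ?_⟩
    exact gkWinning_comap A Val (fun j => ⟨0, Subsingleton.elim _ _⟩) h𝓝
  | succ k _ ih =>
    obtain ⟨𝓜, _, hcard, hwin⟩ := ih
    refine ⟨𝓜.compose (b := 1) 𝓝, inferInstanceAs (Finite (_ × _)), ?_,
      gkWinning_compose A Val hwin h𝓝⟩
    rw [pow_succ]
    exact (Nat.card_prod _ _).trans_le (Nat.mul_le_mul_right _ hcard)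

end GkMachine

end QAut

/-- If Eve has a winning strategy in the 2-token game `G_2(A)`,
then for every `k ≥ 1` she has a winning strategy in the `k`-token game
`G_k(A)`; moreover, if her `G_2` strategy uses memory of size `m` and `A` has
`n` states, then her `G_k` strategy can be implemented with memory of size
`n^(k-1) * m^k`. -/
theorem g2_implies_gk_with_memory {α Q W : Type} [Fintype Q] (A : QAut α Q W)
    (Val : (ℕ → W) → ℝ) (n m : ℕ) (hn : Fintype.card Q = n)
    (s2 : QAut.GkStrat α Q W 2)
    (hs2 : A.GkWinning 2 (QAut.goodVal Val) s2) (hm : GkStratMemory s2 m) :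
    ∀ k : ℕ, 1 ≤ k →
      ∃ s : QAut.GkStrat α Q W k,
        A.GkWinning k (QAut.goodVal Val) s ∧
          GkStratMemory s (n ^ (k - 1) * m ^ k) := by
  intro k hk
  obtain ⟨𝓝, _, h𝓝card, rfl⟩ := hm.exists_gkMachine
  obtain ⟨𝓜, _, h𝓜card, h𝓜win⟩ := QAut.GkMachine.exists_gkMachine_winning A Val hs2 k hk
  have hn_pos : 0 < n := hn ▸ Fintype.card_pos_iff.mpr ⟨A.init⟩
  refine ⟨𝓜.strat, h𝓜win, 𝓜.gkStratMemory_strat.mono ?_⟩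
  calc Nat.card 𝓜.Mem ≤ m ^ k := h𝓜card.trans (Nat.pow_le_pow_left h𝓝card k)
    _ ≤ n ^ (k - 1) * m ^ k := Nat.le_mul_of_pos_left _ (pow_pos hn_pos _)
end

section
/- If a quantitative automaton A is k-history-deterministic for some finite k (Eve wins the k-runs letter game) and Eve wins the k-token game G_k(A), then A is history-deterministic (Eve wins the letter game). -/
/-!
Eve plays the letter game by running, in her head, her winning strategy of the `k`-runs
letter game on the letters Adam plays: its `k` runs serve as Adam's tokens in `G_k(A)`, and
she moves her own token with her winning strategy there. The best of the `k` simulated runs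
achieves the value of the word and her run's value is at least that of each of them.
-/

namespace QAut

section Replay

variable {α M : Type}

def replay (s : List (α × M) → α → M) (l : List α) : List (α × M) :=
  l.foldl (fun hist a => hist ++ [(a, s hist a)]) []

theorem replay_append_singleton (s : List (α × M) → α → M) (l : List α) (a : α) :
    replay s (l ++ [a]) = replay s l ++ [(a, s (replay s l) a)] := by
  simp only [replay, List.foldl_append, List.foldl_cons, List.foldl_nil]

def outcome (s : List (α × M) → α → M) (w : ℕ → α) (n : ℕ) : α × M :=
  (w n, s (replay s ((List.range n).map w)) (w n))

theorem map_range_outcome (s : List (α × M) → α → M) (w : ℕ → α) (n : ℕ) :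
    (List.range n).map (outcome s w) = replay s ((List.range n).map w) := by
  induction n with
  | zero => rfl
  | succ n ih =>
    simp only [List.range_succ, List.map_append, List.map_cons, List.map_nil, ih,
      replay_append_singleton, outcome]

theorem outcome_consistent (s : List (α × M) → α → M) (w : ℕ → α) (n : ℕ) :
    (outcome s w n).2 = s ((List.range n).map (outcome s w)) (outcome s w n).1 := by
  rw [map_range_outcome]
  rfl

end Replay

variable {α Q W : Type} {k : ℕ}

/-- Completes a letter-game history to a history of `G_k(A)` in which Adam's tokens are
moved by the `k`-runs strategy `sK`. -/
def tokenHist (sK : List (KRound α Q W k) → α → Fin k → W × Q) (h : List (LRound α Q W)) :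
    List (GkRound α Q W k) :=
  List.zipWith (fun r kr => (r.1, r.2, kr.2)) h (replay sK (h.map Prod.fst))

def simulate (sK : List (KRound α Q W k) → α → Fin k → W × Q) (sG : GkStrat α Q W k) :
    LStrat α Q W :=
  fun h a => sG (tokenHist sK h) a

theorem map_range_tokenHist (sK : List (KRound α Q W k) → α → Fin k → W × Q)
    (π : ℕ → LRound α Q W) (n : ℕ) :
    (List.range n).map (fun i => ((π i).1, (π i).2, (outcome sK (fun i => (π i).1) i).2)) =
      tokenHist sK ((List.range n).map π) := by
  rw [tokenHist, List.map_map, ← map_range_outcome, List.zipWith_map, List.zipWith_self]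
  rfl

theorem gkConsistent_of_lConsistent (sK : List (KRound α Q W k) → α → Fin k → W × Q)
    {sG : GkStrat α Q W k} {π : ℕ → LRound α Q W} (hπ : LConsistent (simulate sK sG) π) :
    GkConsistent sG (fun i => ((π i).1, (π i).2, (outcome sK (fun i => (π i).1) i).2)) := by
  intro n
  rw [map_range_tokenHist]
  exact hπ n

end QAut

/-- If a quantitative automaton `A` is `k`-history-deterministic for
some finite `k` (Eve wins the `k`-runs letter game) and Eve wins the `k`-token
game `G_k(A)`, then `A` is history-deterministic (Eve wins the letter game). -/
theorem kHD_and_Gk_implies_HD {α Q W : Type} (A : QAut α Q W)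
    (Val : (ℕ → W) → ℝ) (k : ℕ) (hk : 1 ≤ k)
    (hkHD : A.kHD k Val) (hGk : A.EveWinsGk k (QAut.goodVal Val)) :
    A.HD Val := by
  obtain ⟨sK, hsK⟩ := hkHD
  obtain ⟨sG, hsG⟩ := hGk
  -- in `ℝ` a supremum over no tokens is `0`, so `ciSup_le` needs one
  have : Nonempty (Fin k) := ⟨⟨0, hk⟩⟩
  refine ⟨QAut.simulate sK sG, fun π hπ => ?_⟩
  obtain ⟨hAdamRuns, hBestRun⟩ :=
    hsK (QAut.outcome sK (fun n => (π n).1)) (QAut.outcome_consistent sK _)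
  obtain ⟨hEveRun, hEveBeatsAdam⟩ :=
    hsG _ (QAut.gkConsistent_of_lConsistent sK hπ) hAdamRuns
  exact ⟨hEveRun, hBestRun.ge.trans (ciSup_le hEveBeatsAdam)⟩
end

section
/- If Eve has a winning strategy in G_2(A) for a LimSup automaton A with weights {1,...,k}, then for every x ∈ {2,...,k}, Eve has a winning strategy in the 2-token game G_2(A_x) on the Büchi automaton A_x obtained from A by declaring transitions of weight ≥ x accepting. -/
/-- If Eve wins `G_2(A)` for a `LimSup` automaton `A` with weights
`{1,...,k}`, then for every `x ∈ {2,...,k}` Eve wins the 2-token game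
`G_2(A_x)` on the Büchi automaton `A_x` obtained by declaring transitions of
weight `≥ x` accepting (Eve wins a play iff her run is accepting, i.e. takes
transitions of weight `≥ x` infinitely often, or both of Adam's runs are
rejecting). -/
theorem g2_limsup_decompose {α Q : Type} (A : QAut α Q ℕ) (k : ℕ)
    (hW : ∀ q a x q', (q, a, x, q') ∈ A.trans → 1 ≤ x ∧ x ≤ k)
    (h2 : A.EveWinsGk 2 (fun ve va => ∀ j,
      Filter.limsup (va j) Filter.atTop ≤ Filter.limsup ve Filter.atTop)) :
    ∀ x : ℕ, 2 ≤ x → x ≤ k →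
      A.EveWinsGk 2 (fun ve va =>
        {n | x ≤ ve n}.Infinite ∨ ∀ j : Fin 2, ¬ {n | x ≤ va j n}.Infinite) := by
  intro x hx2 hxk
  obtain ⟨s, hs⟩ := h2
  refine ⟨s, fun π hcons hadam => ?_⟩
  obtain ⟨hrun, hlim⟩ := hs π hcons hadam
  refine ⟨hrun, ?_⟩
  by_cases hA : ∀ j : Fin 2, ¬ {n | x ≤ (((π n).2.2 j).1 : ℕ)}.Infinite
  · exact Or.inr hA
  · push_neg at hA
    obtain ⟨j, hj⟩ := hA
    left
    -- Eve's weights bounded by k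
    have hbe : ∀ n, ((π n).2.1).1 ≤ k := by
      intro n
      have := hrun n
      exact (hW _ _ _ _ this).2
    have hba : ∀ n, ((π n).2.2 j).1 ≤ k := by
      intro n
      have := hadam j n
      exact (hW _ _ _ _ this).2
    have hbound : Filter.IsBoundedUnder (· ≤ ·) Filter.atTop
        (fun n => (((π n).2.2 j).1 : ℕ)) :=
      Filter.isBoundedUnder_of ⟨k, hba⟩
    have hfreq : ∃ᶠ n in Filter.atTop, x ≤ (((π n).2.2 j).1 : ℕ) :=
      Nat.frequently_atTop_iff_infinite.mpr hj
    have h1 : x ≤ Filter.limsup (fun n => (((π n).2.2 j).1 : ℕ)) Filter.atTop :=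
      Filter.le_limsup_of_frequently_le hfreq hbound
    have h2' : x ≤ Filter.limsup (fun n => (((π n).2.1).1 : ℕ)) Filter.atTop :=
      le_trans h1 (hlim j)
    by_contra hfin
    rw [Set.not_infinite] at hfin
    have hev : ∀ᶠ n in Filter.atTop, (((π n).2.1).1 : ℕ) ≤ x - 1 := by
      have := hfin.bddAbove
      obtain ⟨N, hN⟩ := this
      refine Filter.eventually_atTop.mpr ⟨N + 1, fun n hn => ?_⟩
      by_contra hc
      push_neg at hc
      have hmem : n ∈ {n | x ≤ ((π n).2.1).1} := by
        simp only [Set.mem_setOf_eq]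
        omega
      have := hN hmem
      omega
    have hcb : Filter.IsCoboundedUnder (· ≤ ·) Filter.atTop
        (fun n => (((π n).2.1).1 : ℕ)) :=
      ⟨0, fun a _ => Nat.zero_le a⟩
    have := Filter.limsup_le_of_le hcb hev
    omega
end

section
/- If Eve has a winning strategy in G_2(A) for a LimInf automaton A with weights {1,...,k}, then for every x ∈ {2,...,k}, Eve has a winning strategy in the 2-token game G_2(A_x) on the coBüchi automaton A_x obtained from A by declaring transitions of weight < x rejecting. -/
open Filter

lemma finite_iff_ev (f : ℕ → ℕ) (x : ℕ) :
    {n | f n < x}.Finite ↔ ∀ᶠ n in atTop, x ≤ f n := by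
  constructor
  · intro h
    rcases h.bddAbove with ⟨N, hN⟩
    filter_upwards [eventually_gt_atTop N] with n hn
    by_contra hlt
    exact absurd (hN (by simpa using Nat.lt_of_not_le hlt)) (Nat.not_le.2 hn)
  · intro h
    rcases eventually_atTop.1 h with ⟨N, hN⟩
    exact (Set.finite_Iio N).subset fun n hn => by
      by_contra hge
      exact absurd (hN n (Nat.le_of_not_lt hge)) (Nat.not_le.2 hn)

lemma liminf_ge_iff (f : ℕ → ℕ) (k : ℕ) (hk : ∀ n, f n ≤ k) (x : ℕ) :
    x ≤ Filter.liminf f Filter.atTop ↔ ∀ᶠ n in atTop, x ≤ f n := by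
  rw [Filter.liminf_eq]
  have hbdd : BddAbove {a | ∀ᶠ n in atTop, a ≤ f n} := by
    refine ⟨k, fun a ha => ?_⟩
    rcases (ha.and (eventually_ge_atTop 0)).exists with ⟨n, hn, -⟩
    exact hn.trans (hk n)
  constructor
  · intro h
    have hmem : sSup {a | ∀ᶠ n in atTop, a ≤ f n} ∈ {a | ∀ᶠ n in atTop, a ≤ f n} :=
      Nat.sSup_mem ⟨0, by simp⟩ hbdd
    filter_upwards [hmem] with n hn
    exact h.trans hn
  · intro h
    exact le_csSup hbdd h

/-- If Eve wins `G_2(A)` for a `LimInf` automaton `A` with weights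
`{1,...,k}`, then for every `x ∈ {2,...,k}` Eve wins the 2-token game
`G_2(A_x)` on the coBüchi automaton `A_x` obtained by declaring transitions of
weight `< x` rejecting (a run is accepting iff it takes rejecting transitions
only finitely often; Eve wins a play iff her run is accepting or both of Adam's
runs are rejecting). -/
theorem g2_liminf_decompose {α Q : Type} (A : QAut α Q ℕ) (k : ℕ)
    (hW : ∀ q a x q', (q, a, x, q') ∈ A.trans → 1 ≤ x ∧ x ≤ k)
    (h2 : A.EveWinsGk 2 (fun ve va => ∀ j,
      Filter.liminf (va j) Filter.atTop ≤ Filter.liminf ve Filter.atTop)) :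
    ∀ x : ℕ, 2 ≤ x → x ≤ k →
      A.EveWinsGk 2 (fun ve va =>
        {n | ve n < x}.Finite ∨ ∀ j : Fin 2, ¬ {n | va j n < x}.Finite) := by
  intro x _ _
  obtain ⟨s, hs⟩ := h2
  refine ⟨s, fun π hcons hA => ?_⟩
  obtain ⟨hrun, hgood⟩ := hs π hcons hA
  refine ⟨hrun, ?_⟩
  by_cases hfin : ∀ j : Fin 2, ¬ {n | ((π n).2.2 j).1 < x}.Finite
  · exact Or.inr hfin
  · left
    push_neg at hfin
    obtain ⟨j, hj⟩ := hfin
    have hvek : ∀ n, ((π n).2.1).1 ≤ k := fun n => (hW _ _ _ _ (hrun n)).2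
    have hvak : ∀ n, ((π n).2.2 j).1 ≤ k := fun n => (hW _ _ _ _ (hA j n)).2
    have h1 : x ≤ Filter.liminf (fun n => ((π n).2.2 j).1) Filter.atTop :=
      (liminf_ge_iff _ k hvak x).2 ((finite_iff_ev _ x).1 hj)
    have h2 : x ≤ Filter.liminf (fun n => ((π n).2.1).1) Filter.atTop :=
      h1.trans (hgood j)
    exact (finite_iff_ev _ x).2 ((liminf_ge_iff _ k hvek x).1 h2)
end

section
/- Let A be a LimSup automaton with weights {1,...,k}. If for every x ∈ {2,...,k} the Büchi automaton A_x (transitions of weight ≥ x accepting) is history-deterministic, then A is (k−1)-history-deterministic: Eve wins the (k−1)-runs letter game on A. -/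
namespace QAut

variable {α Q : Type} (A : QAut α Q ℕ)

/-- The value of the `LimSup` automaton `A` on word `w`: the supremum over runs
of the largest weight occurring infinitely often. -/
noncomputable def limSupWordVal (w : ℕ → α) : ℕ :=
  sSup { v | ∃ τ, A.RunOn w τ ∧ v = Filter.limsup (fun n => (τ n).1) Filter.atTop }

/-- The Büchi automaton `A_x` (transitions of weight `≥ x` accepting) is
history-deterministic: Eve wins the letter game where she wins a play iff,
whenever the word has an accepting run, her run is accepting. -/
def buchiHD (x : ℕ) : Prop :=
  ∃ s : LStrat α Q ℕ, A.LetterWinning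
    (fun w ve => (∃ τ, A.RunOn w τ ∧ {n | x ≤ (τ n).1}.Infinite) →
      {n | x ≤ ve n}.Infinite) s

end QAut

section Aux

lemma aux_limsup_le_of_bdd {f : ℕ → ℕ} {k : ℕ} (h : ∀ n, f n ≤ k) :
    Filter.limsup f Filter.atTop ≤ k := by
  rw [Filter.limsup_eq]
  exact Nat.sInf_le (Filter.Eventually.of_forall h)

lemma aux_le_limsup_of_infinite {f : ℕ → ℕ} {k x : ℕ} (hb : ∀ n, f n ≤ k)
    (h : {n | x ≤ f n}.Infinite) : x ≤ Filter.limsup f Filter.atTop := by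
  rw [Filter.limsup_eq]
  refine le_csInf ⟨k, Filter.Eventually.of_forall hb⟩ (fun a ha => ?_)
  obtain ⟨m, hm⟩ := Filter.eventually_atTop.1 ha
  obtain ⟨n, hn1, hn2⟩ := h.exists_gt m
  exact le_trans hn1 (hm n hn2.le)

lemma aux_infinite_of_le_limsup {f : ℕ → ℕ} {v : ℕ} (hv : 1 ≤ v)
    (h : v ≤ Filter.limsup f Filter.atTop) : {n | v ≤ f n}.Infinite := by
  by_contra hfin
  rw [Set.not_infinite] at hfin
  have hev : ∀ᶠ n in Filter.atTop, f n ≤ v - 1 := by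
    obtain ⟨m, hm⟩ := hfin.bddAbove
    refine Filter.eventually_atTop.2 ⟨m + 1, fun n hn => ?_⟩
    by_contra hle
    push_neg at hle
    have h1 : v ≤ f n := by omega
    have h2 := hm h1
    omega
  have h2 : Filter.limsup f Filter.atTop ≤ v - 1 := by
    rw [Filter.limsup_eq]; exact Nat.sInf_le hev
  omega

/-- Pick some legal transition. -/
noncomputable def auxPick {α Q : Type} (A : QAut α Q ℕ) (q : Q) (a : α) : ℕ × Q :=
  ⟨(A.total q a).choose, (A.total q a).choose_spec.choose⟩

lemma auxPick_mem {α Q : Type} (A : QAut α Q ℕ) (q : Q) (a : α) :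
    (q, a, (auxPick A q a).1, (auxPick A q a).2) ∈ A.trans :=
  (A.total q a).choose_spec.choose_spec

/-- Some legal run from `q` over `w`. -/
noncomputable def auxRun {α Q : Type} (A : QAut α Q ℕ) (q : Q) (w : ℕ → α) : ℕ → ℕ × Q
  | 0 => auxPick A q (w 0)
  | n + 1 => auxPick A (auxRun A q w n).2 (w (n + 1))

lemma auxRun_run {α Q : Type} (A : QAut α Q ℕ) (q : Q) (w : ℕ → α) :
    A.RunFrom q w (auxRun A q w) := by
  intro n
  cases n with
  | zero => exact auxPick_mem A q (w 0)
  | succ n => exact auxPick_mem A (auxRun A q w n).2 (w (n + 1))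

end Aux

/-- Let `A` be a `LimSup` automaton with weights `{1,...,k}`. If
for every `x ∈ {2,...,k}` the Büchi automaton `A_x` (transitions of weight
`≥ x` accepting) is history-deterministic, then `A` is
`(k-1)`-history-deterministic: Eve wins the `(k-1)`-runs letter game on `A`,
i.e. she can move `k-1` tokens so that the maximum of the `LimSup` values of
her runs equals the value of the word. -/
theorem buchiHD_implies_kHD {α Q : Type} (A : QAut α Q ℕ) (k : ℕ) (hk : 2 ≤ k)
    (hW : ∀ q a x q', (q, a, x, q') ∈ A.trans → 1 ≤ x ∧ x ≤ k)
    (hHD : ∀ x : ℕ, 2 ≤ x → x ≤ k → A.buchiHD x) :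
    ∃ s : List (QAut.KRound α Q ℕ (k - 1)) → α → Fin (k - 1) → ℕ × Q,
      ∀ π : ℕ → QAut.KRound α Q ℕ (k - 1),
        (∀ n, (π n).2 = s ((List.range n).map π) (π n).1) →
        (∀ j, A.RunOn (fun n => (π n).1) (fun n => (π n).2 j)) ∧
          (⨆ j, Filter.limsup (fun n => ((π n).2 j).1) Filter.atTop) =
            A.limSupWordVal (fun n => (π n).1) := by
  classical
  have hk1 : 1 ≤ k - 1 := by omega
  have hne : Nonempty (Fin (k - 1)) := ⟨⟨0, by omega⟩⟩
  -- choose HD strategies for each x = j + 2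
  have hstr : ∀ j : Fin (k - 1), ∃ s : QAut.LStrat α Q ℕ, A.LetterWinning
      (fun w ve => (∃ τ, A.RunOn w τ ∧ {n | (j : ℕ) + 2 ≤ (τ n).1}.Infinite) →
        {n | (j : ℕ) + 2 ≤ ve n}.Infinite) s := by
    intro j
    exact hHD ((j : ℕ) + 2) (by omega) (by have := j.isLt; omega)
  choose S hS using hstr
  refine ⟨fun h a j => S j (h.map (fun r => (r.1, r.2 j))) a, ?_⟩
  intro π hπ
  set w : ℕ → α := fun n => (π n).1 with hw
  -- the projected plays
  set πj : Fin (k - 1) → ℕ → QAut.LRound α Q ℕ :=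
    fun j n => ((π n).1, (π n).2 j) with hπj
  have hcons : ∀ j, QAut.LConsistent (S j) (πj j) := by
    intro j n
    have h1 : (π n).2 j = S j (((List.range n).map π).map (fun r => (r.1, r.2 j)))
        (π n).1 := congrFun (hπ n) j
    rw [List.map_map] at h1
    exact h1
  have hSj := fun j => hS j (πj j) (hcons j)
  have hruns : ∀ j, A.RunOn w (fun n => (π n).2 j) := fun j => (hSj j).1
  refine ⟨hruns, ?_⟩
  set L : Fin (k - 1) → ℕ := fun j =>
    Filter.limsup (fun n => ((π n).2 j).1) Filter.atTop with hL
  -- weights of legal runs are in [1, k]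
  have hwt : ∀ τ, A.RunOn w τ → ∀ n, 1 ≤ (τ n).1 ∧ (τ n).1 ≤ k := by
    intro τ hτ n
    exact hW _ _ _ _ (hτ n)
  -- the value set
  set V : Set ℕ := { v | ∃ τ, A.RunOn w τ ∧
      v = Filter.limsup (fun n => (τ n).1) Filter.atTop } with hV
  have hVne : V.Nonempty := by
    refine ⟨_, auxRun A A.init w, auxRun_run A A.init w, rfl⟩
  have hVbdd : ∀ v ∈ V, v ≤ k := by
    rintro v ⟨τ, hτ, rfl⟩
    exact aux_limsup_le_of_bdd (fun n => (hwt τ hτ n).2)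
  have hVbdd' : BddAbove V := ⟨k, hVbdd⟩
  have hval : A.limSupWordVal w = sSup V := rfl
  have hmem : sSup V ∈ V := Nat.sSup_mem hVne hVbdd'
  -- Lower/upper bounds on member runs' limsups
  have hL1 : ∀ j, 1 ≤ L j := by
    intro j
    refine aux_le_limsup_of_infinite (fun n => (hwt _ (hruns j) n).2) ?_
    have : {n : ℕ | 1 ≤ ((π n).2 j).1} = Set.univ := by
      ext n; simp [(hwt _ (hruns j) n).1]
    rw [this]
    exact Set.infinite_univ
  have hLk : ∀ j, L j ≤ k := fun j =>
    aux_limsup_le_of_bdd (fun n => (hwt _ (hruns j) n).2)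
  have hbddL : BddAbove (Set.range L) := by
    refine ⟨k, ?_⟩
    rintro x ⟨j, rfl⟩
    exact hLk j
  rw [hval]
  apply le_antisymm
  · refine ciSup_le (fun j => ?_)
    exact le_csSup hVbdd' ⟨fun n => (π n).2 j, hruns j, rfl⟩
  · set v := sSup V with hvdef
    have hvk : v ≤ k := hVbdd v hmem
    obtain ⟨τ, hτ, hτv⟩ := hmem
    have hv1 : 1 ≤ v := by
      rw [hτv]
      refine aux_le_limsup_of_infinite (fun n => (hwt τ hτ n).2) ?_
      have : {n : ℕ | 1 ≤ (τ n).1} = Set.univ := by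
        ext n; simp [(hwt τ hτ n).1]
      rw [this]
      exact Set.infinite_univ
    rcases eq_or_lt_of_le hv1 with h1 | h2
    · -- v = 1: any token works
      calc v = 1 := h1.symm
        _ ≤ L ⟨0, by omega⟩ := hL1 _
        _ ≤ ⨆ j, L j := le_ciSup hbddL _
    · -- v ≥ 2: token v - 2 achieves value ≥ v
      have hv2 : 2 ≤ v := h2
      set j : Fin (k - 1) := ⟨v - 2, by omega⟩ with hj
      have hxv : (j : ℕ) + 2 = v := by simp [hj]; omega
      have hinf : {n | (j : ℕ) + 2 ≤ (τ n).1}.Infinite := by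
        rw [hxv]
        exact aux_infinite_of_le_limsup hv1 hτv.le
      have htok := (hSj j).2 ⟨τ, hτ, hinf⟩
      have hLj : v ≤ L j := by
        rw [← hxv]
        exact aux_le_limsup_of_infinite (fun n => (hwt _ (hruns j) n).2) htok
      exact hLj.trans (le_ciSup hbddL j)
end

section
/- In a 1-token game G_1(A) on a quantitative automaton A, if Eve plays a winning strategy, then against every copycat strategy of Adam she never makes a non-cautious move; consequently a winning strategy for Eve in G_1(A) induces a cautious strategy for Eve in the letter game on A. -/
/-- The letter-game strategy induced by a 1-token game strategy `s`: Eve plays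
as `s` would, assuming Adam plays a copycat strategy (moving his token exactly
as Eve's). -/
def inducedLetterStrat {α Q W : Type} (s : QAut.GkStrat α Q W 1) :
    QAut.LStrat α Q W :=
  fun h a => s (h.map fun r => (r.1, r.2, fun _ => r.2)) a

/-! Suppose Eve's winning strategy `s` made a non-cautious move after a history `h`
consistent with the induced strategy, witnessed by a word `u` and a run `π'`. Let Adam copy
Eve's transitions along `h` and then play `u` while moving his token along `π'`; his moves do
not depend on Eve's, and Eve replays `h` because `h` is consistent with the induced strategy.
After `h` Eve's run begins with the non-cautious move, so its value is strictly below that of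
Adam's run, and `s` loses this play. -/

theorem List.map_range_eq_map_take {β γ : Type} {f : ℕ → γ} {g : β → γ} {l : List β} {n : ℕ}
    (hn : n ≤ l.length) (hf : ∀ m (hm : m < n), f m = g (l[m]'(by omega))) :
    (List.range n).map f = (l.take n).map g := by
  refine List.ext_getElem (by simp [hn]) fun m h₁ _ => ?_
  simp only [List.length_map, List.length_range] at h₁
  simp [hf m h₁]

namespace QAut

section Splice

variable {β γ : Type} (pre : List β) (f : ℕ → β)

theorem splice_of_lt {n : ℕ} (hn : n < pre.length) : splice pre f n = pre[n] :=
  dif_pos hn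

theorem splice_length_add (m : ℕ) : splice pre f (pre.length + m) = f m := by
  simp [splice]

theorem splice_nil : splice [] f = f := by
  funext n
  simp [splice]

theorem splice_cons_zero (b : β) : splice (b :: pre) f 0 = b := rfl

theorem splice_cons_succ (b : β) (n : ℕ) :
    splice (b :: pre) f (n + 1) = splice pre f n := by
  simp [splice]

theorem map_splice (g : β → γ) :
    (fun n => g (splice pre f n)) = splice (pre.map g) (fun n => g (f n)) := by
  funext n
  by_cases hn : n < pre.length <;> simp [splice, hn]

theorem eq_splice_drop {g : ℕ → β} (hg : ∀ n (hn : n < pre.length), g n = pre[n]) :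
    g = splice pre (fun m => g (pre.length + m)) := by
  funext n
  by_cases hn : n < pre.length
  · rw [splice_of_lt _ _ hn, hg n hn]
  · obtain ⟨m, rfl⟩ := Nat.exists_eq_add_of_le (not_lt.mp hn)
    rw [splice_length_add]

end Splice

section Runs

variable {α Q W : Type} (A : QAut α Q W)

theorem stateAt_succ (q : Q) (τ : ℕ → W × Q) (n : ℕ) :
    stateAt q τ (n + 1) = stateAt (τ 0).2 (fun m => τ (m + 1)) n := by
  cases n <;> rfl

theorem runFrom_iff {q : Q} {w : ℕ → α} {τ : ℕ → W × Q} :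
    A.RunFrom q w τ ↔ (q, w 0, (τ 0).1, (τ 0).2) ∈ A.trans ∧
      A.RunFrom (τ 0).2 (fun n => w (n + 1)) (fun n => τ (n + 1)) := by
  refine ⟨fun h => ⟨h 0, fun n => ?_⟩, fun ⟨h₀, h⟩ n => ?_⟩
  · simpa only [stateAt_succ] using h (n + 1)
  · cases n with
    | zero => exact h₀
    | succ n => simpa only [RunFrom, stateAt_succ] using h n

theorem runFrom_splice_iff (h : List (LRound α Q W)) {q : Q} {u : ℕ → α} {τ : ℕ → W × Q} :
    A.RunFrom q (splice (h.map Prod.fst) u) (splice (h.map Prod.snd) τ) ↔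
      A.FinRun q h ∧ A.RunFrom (endSt q h) u τ := by
  induction h generalizing q with
  | nil => simp [splice_nil, FinRun, endSt]
  | cons r t ih =>
    rw [runFrom_iff]
    simp only [List.map_cons, splice_cons_zero, splice_cons_succ, ih, FinRun, endSt, and_assoc]

end Runs

section Copycat

variable {α Q W : Type}

/-- The history of the play of `s` against Adam's letters and token moves `adam`, which are
fixed in advance rather than reacting to Eve. -/
def gkHistory {k : ℕ} (s : GkStrat α Q W k) (adam : ℕ → α × (Fin k → W × Q)) :
    ℕ → List (GkRound α Q W k)
  | 0 => []
  | n + 1 =>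
    gkHistory s adam n ++ [((adam n).1, s (gkHistory s adam n) (adam n).1, (adam n).2)]

def gkPlay {k : ℕ} (s : GkStrat α Q W k) (adam : ℕ → α × (Fin k → W × Q)) (n : ℕ) :
    GkRound α Q W k :=
  ((adam n).1, s (gkHistory s adam n) (adam n).1, (adam n).2)

theorem gkHistory_eq {k : ℕ} (s : GkStrat α Q W k) (adam : ℕ → α × (Fin k → W × Q))
    (n : ℕ) : gkHistory s adam n = (List.range n).map (gkPlay s adam) := by
  induction n with
  | zero => rfl
  | succ n ih => rw [gkHistory, List.range_succ, List.map_append, ← ih]; rfl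

theorem gkConsistent_gkPlay {k : ℕ} (s : GkStrat α Q W k)
    (adam : ℕ → α × (Fin k → W × Q)) : GkConsistent s (gkPlay s adam) := by
  intro n
  rw [← gkHistory_eq]
  rfl

def copycatRound (r : LRound α Q W) : GkRound α Q W 1 := (r.1, r.2, fun _ => r.2)

theorem eq_copycatRound_of_histConsistent {s : GkStrat α Q W 1} {π : ℕ → GkRound α Q W 1}
    (hπ : GkConsistent s π) {h : List (LRound α Q W)}
    (hh : HistConsistent (inducedLetterStrat s) h)
    (hadam : ∀ n (hn : n < h.length), (π n).1 = h[n].1 ∧ (π n).2.2 = fun _ => h[n].2) :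
    ∀ n (hn : n < h.length), π n = copycatRound h[n] := by
  intro n
  induction n using Nat.strong_induction_on with
  | _ n ih =>
    intro hn
    obtain ⟨hletter, hmoves⟩ := hadam n hn
    have hhist : (List.range n).map π = (h.take n).map copycatRound :=
      List.map_range_eq_map_take hn.le fun m hm => ih m hm (hm.trans hn)
    have heve : (π n).2.1 = h[n].2 := by
      rw [hπ n, hhist, hletter]
      exact (hh n hn).symm
    ext <;> simp [copycatRound, hletter, heve, hmoves]

end Copycat

end QAut

open QAut

/-- If Eve plays a winning strategy in the 1-token game `G_1(A)`,
then against every copycat strategy of Adam she never makes a non-cautious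
move; consequently a winning strategy for Eve in `G_1(A)` induces a cautious
strategy for Eve in the letter game on `A`. -/
theorem g1_winning_induces_cautious {α Q W : Type} (A : QAut α Q W)
    (Val : (ℕ → W) → ℝ) (s : QAut.GkStrat α Q W 1)
    (hs : A.GkWinning 1 (QAut.goodVal Val) s) :
    A.Cautious Val (inducedLetterStrat s) := by
  intro h hFin hCons σ ⟨u, hu0, π', hπ', hlt⟩
  set π := gkPlay s fun n =>
    (splice (h.map Prod.fst) u n, fun (_ : Fin 1) => splice (h.map Prod.snd) π' n)
  have hπ : GkConsistent s π := gkConsistent_gkPlay _ _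
  obtain ⟨hEve, hgood⟩ := hs π hπ fun _ => (A.runFrom_splice_iff h).2 ⟨hFin, hπ'⟩
  have hprefix := eq_copycatRound_of_histConsistent hπ hCons
    fun n hn => by simp [π, gkPlay, splice_of_lt, hn]
  set e := fun n => (π n).2.1
  have he : e = splice (h.map Prod.snd) (fun m => e (h.length + m)) := by
    rw [← h.length_map Prod.snd]
    exact eq_splice_drop _ fun n hn => by
      simpa [copycatRound] using congrArg (·.2.1) (hprefix n (by simpa using hn))
  have hEveTail : A.RunFrom (endSt A.init h) u (fun m => e (h.length + m)) := by
    rw [he] at hEve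
    exact ((A.runFrom_splice_iff h).1 hEve).2
  have hfirst : e (h.length + 0) = inducedLetterStrat s h σ := by
    have hhist : (List.range h.length).map π = h.map copycatRound := by
      rw [List.map_range_eq_map_take le_rfl hprefix, List.take_length]
    have hletter : (π h.length).1 = σ := by simp [π, gkPlay, splice, hu0]
    calc e (h.length + 0) = s ((List.range h.length).map π) (π h.length).1 := hπ h.length
      _ = inducedLetterStrat s h σ := by rw [hhist, hletter]; rfl
  have hvalue : Val (fun n => (splice (h.map Prod.snd) π' n).1) ≤ Val (fun n => (e n).1) :=
    hgood 0
  rw [he, map_splice, map_splice, List.map_map] at hvalue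
  exact absurd hvalue (not_le.mpr (hlt _ hEveTail hfirst))
end

section
/- Every value function on finite sequences is present-focused: for any quantitative automaton A on finite words, every cautious strategy for Eve in the letter game on A is winning. -/
namespace QAut

variable {α Q W : Type}

/-- `τ` is a legal finite run of `A` from `q` over the finite word `u`. -/
def FinRunOn (A : QAut α Q W) : Q → List α → List (W × Q) → Prop
  | _, [], [] => True
  | q, a :: u, xq :: τ => (q, a, xq.1, xq.2) ∈ A.trans ∧ FinRunOn A xq.2 u τ
  | _, _ :: _, [] => False
  | _, [], _ :: _ => False

/-- The value of the automaton `A` on a finite word `u` for the value function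
`Val` on finite sequences: the supremum over runs of `A` on `u`. -/
noncomputable def finWordVal (A : QAut α Q W) (Val : List W → ℝ) (u : List α) : ℝ :=
  sSup { v | ∃ τ, A.FinRunOn A.init u τ ∧ v = Val (τ.map Prod.fst) }

/-- The move `t` of Eve on letter `σ` after history `h` is non-cautious in the
finite-word setting: some finite continuation word `w` admits a run `π'` from
the current state over `σ·w` whose value (with the prefix) strictly exceeds the
value of every run over `σ·w` starting with `t`. -/
def NonCautiousFin (A : QAut α Q W) (Val : List W → ℝ)
    (h : List (LRound α Q W)) (σ : α) (t : W × Q) : Prop :=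
  ∃ w : List α, ∃ π', A.FinRunOn (endSt A.init h) (σ :: w) π' ∧
    ∀ π, A.FinRunOn (endSt A.init h) (σ :: w) π → π.head? = some t →
      Val ((h.map fun r => r.2.1) ++ π.map Prod.fst) <
        Val ((h.map fun r => r.2.1) ++ π'.map Prod.fst)

/-- A letter-game strategy is cautious in the finite-word setting. -/
def CautiousFin (A : QAut α Q W) (Val : List W → ℝ) (s : LStrat α Q W) : Prop :=
  ∀ h, A.FinRun A.init h → HistConsistent s h →
    ∀ σ, ¬ A.NonCautiousFin Val h σ (s h σ)

/-- `s` is winning for Eve in the letter game on the finite-word automaton `A`: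
on every play consistent with `s`, after every finite prefix, Eve's run prefix
is legal and its value is at least the value of `A` on the word prefix. -/
def LetterWinningFin (A : QAut α Q W) (Val : List W → ℝ) (s : LStrat α Q W) : Prop :=
  ∀ π : ℕ → LRound α Q W, LConsistent s π → ∀ n : ℕ,
    A.FinRun A.init ((List.range n).map π) ∧
      A.finWordVal Val (((List.range n).map π).map Prod.fst) ≤
        Val (((List.range n).map π).map fun r => r.2.1)

end QAut

/-!
Along a play consistent with a cautious strategy, every history `h` is *prefix-optimal*: any run over
an extension `h·w` of the word is matched in value by `h` followed by some run over `w` from the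
current state. This holds for the empty history, and a move that would destroy it is exactly a
non-cautious one. Taking `w` empty gives the winning condition; legality of each move follows
because, by totality, an illegal transition is non-cautious.
-/

namespace QAut

variable {α Q W : Type} (A : QAut α Q W) (Val : List W → ℝ)

theorem exists_finRunOn (q : Q) (u : List α) : ∃ τ, A.FinRunOn q u τ := by
  induction u generalizing q with
  | nil => exact ⟨[], trivial⟩
  | cons a u ih =>
    obtain ⟨x, q', hx⟩ := A.total q a
    obtain ⟨τ, hτ⟩ := ih q'
    exact ⟨(x, q') :: τ, hx, hτ⟩

theorem finRunOn_nil_iff {q : Q} {τ : List (W × Q)} : A.FinRunOn q [] τ ↔ τ = [] := by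
  cases τ <;> simp [FinRunOn]

theorem endSt_append_singleton (q : Q) (h : List (LRound α Q W)) (r : LRound α Q W) :
    endSt q (h ++ [r]) = r.2.2 := by
  induction h generalizing q with
  | nil => rfl
  | cons a t ih => exact ih a.2.2

theorem finRun_append_singleton (q : Q) (h : List (LRound α Q W)) (r : LRound α Q W) :
    A.FinRun q (h ++ [r]) ↔ A.FinRun q h ∧ (endSt q h, r.1, r.2.1, r.2.2) ∈ A.trans := by
  induction h generalizing q with
  | nil => simp [FinRun, endSt]
  | cons a t ih =>
    simp only [List.cons_append, FinRun, endSt, ih]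
    tauto

theorem histConsistent_of_lConsistent {s : LStrat α Q W} {π : ℕ → LRound α Q W}
    (hc : LConsistent s π) (n : ℕ) : HistConsistent s ((List.range n).map π) := by
  intro m hm
  have hmn : m < n := by simpa using hm
  have htake : ((List.range n).map π).take m = (List.range m).map π := by
    rw [← List.map_take, List.take_range, Nat.min_eq_left hmn.le]
  simpa [htake] using hc m

def PrefixOptimal (h : List (LRound α Q W)) : Prop :=
  ∀ (w : List α) (π' : List (W × Q)), A.FinRunOn A.init (h.map Prod.fst ++ w) π' →
    ∃ πr, A.FinRunOn (endSt A.init h) w πr ∧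
      Val (π'.map Prod.fst) ≤ Val (h.map (fun r => r.2.1) ++ πr.map Prod.fst)

theorem prefixOptimal_nil : A.PrefixOptimal Val [] :=
  fun _ π' hπ' => ⟨π', hπ', le_rfl⟩

theorem finWordVal_le_of_prefixOptimal {h : List (LRound α Q W)}
    (hopt : A.PrefixOptimal Val h) :
    A.finWordVal Val (h.map Prod.fst) ≤ Val (h.map fun r => r.2.1) := by
  obtain ⟨τ, hτ⟩ := A.exists_finRunOn A.init (h.map Prod.fst)
  refine csSup_le ⟨_, τ, hτ, rfl⟩ ?_
  rintro v ⟨π', hπ', rfl⟩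
  obtain ⟨πr, hπr, hle⟩ := hopt [] π' (by simpa using hπ')
  simpa [(A.finRunOn_nil_iff).1 hπr] using hle

theorem mem_trans_of_not_nonCautiousFin {h : List (LRound α Q W)} {σ : α} {t : W × Q}
    (hcau : ¬ A.NonCautiousFin Val h σ t) : (endSt A.init h, σ, t.1, t.2) ∈ A.trans := by
  by_contra hnot
  obtain ⟨x, q', hx⟩ := A.total (endSt A.init h) σ
  refine hcau ⟨[], [(x, q')], ⟨hx, trivial⟩, ?_⟩
  rintro (_ | ⟨p, rest⟩) hπ hhead
  · simp [FinRunOn] at hπ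
  · obtain rfl : p = t := by simpa using hhead
    exact absurd hπ.1 hnot

theorem prefixOptimal_append_of_not_nonCautiousFin {h : List (LRound α Q W)} {σ : α}
    {t : W × Q} (hopt : A.PrefixOptimal Val h) (hcau : ¬ A.NonCautiousFin Val h σ t) :
    A.PrefixOptimal Val (h ++ [(σ, t)]) := by
  intro w π' hπ'
  by_contra! hworse
  obtain ⟨τ, hτ, hle⟩ := hopt (σ :: w) π' (by simpa using hπ')
  refine hcau ⟨w, τ, hτ, ?_⟩
  rintro (_ | ⟨p, rest⟩) hπ hhead
  · simp [FinRunOn] at hπ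
  · obtain rfl : p = t := by simpa using hhead
    have hrest : A.FinRunOn (endSt A.init (h ++ [(σ, p)])) w rest := by
      rw [endSt_append_singleton]
      exact hπ.2
    calc Val (h.map (fun r => r.2.1) ++ ((p :: rest).map Prod.fst))
        = Val ((h ++ [(σ, p)]).map (fun r => r.2.1) ++ rest.map Prod.fst) := by simp
      _ < Val (π'.map Prod.fst) := hworse rest hrest
      _ ≤ _ := hle

theorem finRun_and_prefixOptimal_of_cautiousFin {s : LStrat α Q W}
    (hs : A.CautiousFin Val s) {π : ℕ → LRound α Q W} (hc : LConsistent s π) (n : ℕ) :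
    A.FinRun A.init ((List.range n).map π) ∧ A.PrefixOptimal Val ((List.range n).map π) := by
  induction n with
  | zero => exact ⟨trivial, A.prefixOptimal_nil Val⟩
  | succ n ih =>
    obtain ⟨hrun, hopt⟩ := ih
    have hcau : ¬ A.NonCautiousFin Val ((List.range n).map π) (π n).1 (π n).2 := by
      rw [hc n]
      exact hs _ hrun (histConsistent_of_lConsistent hc n) (π n).1
    rw [List.range_succ, List.map_append, List.map_singleton]
    exact ⟨(A.finRun_append_singleton _ _ _).2 ⟨hrun, A.mem_trans_of_not_nonCautiousFin Val hcau⟩,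
      A.prefixOptimal_append_of_not_nonCautiousFin Val hopt hcau⟩

end QAut

/-- Every value function on finite sequences is present-focused:
for any quantitative automaton `A` on finite words, every cautious strategy for
Eve in the letter game on `A` is winning. -/
theorem finite_words_present_focused {α Q W : Type} (Val : List W → ℝ)
    (A : QAut α Q W) (s : QAut.LStrat α Q W)
    (hs : A.CautiousFin Val s) : A.LetterWinningFin Val s := by
  intro π hc n
  obtain ⟨hrun, hopt⟩ := A.finRun_and_prefixOptimal_of_cautiousFin Val hs hc n
  exact ⟨hrun, A.finWordVal_le_of_prefixOptimal Val hopt⟩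
end

section
/- There exists a Sup automaton on infinite words with two states over alphabet {a,b} such that Eve wins the 1-token game G_1(A) but A is not history-deterministic; hence G_1 does not characterise history-determinism for Sup automata on infinite words. -/
/-- The `Sup` value function on infinite sequences of rational weights. -/
noncomputable def SupVal (v : ℕ → ℚ) : ℝ := ⨆ n, ((v n : ℚ) : ℝ)

namespace G1Sup
open QAut

/-- Weight of the unique-weight transition from state `q` on letter `σ`. -/
def wt (q σ : Fin 2) : ℚ :=
  if q = 0 then (if σ = 0 then 0 else 3) else (if σ = 0 then 1 else 2)

lemma fin2cases (q : Fin 2) : q = 0 ∨ q = 1 := by omega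

lemma wt_nonneg (q σ : Fin 2) : 0 ≤ wt q σ := by unfold wt; split_ifs <;> norm_num

lemma wt_le (q σ : Fin 2) : wt q σ ≤ 3 := by unfold wt; split_ifs <;> norm_num

lemma wt_one_ge (σ : Fin 2) : 1 ≤ wt 1 σ := by
  unfold wt; rw [if_neg (by decide)]; split_ifs <;> norm_num

/-- The witness automaton. -/
def A : QAut (Fin 2) (Fin 2) ℚ where
  init := 0
  trans := {t | t.2.2.1 = wt t.1 t.2.1 ∧ (t.1 = 1 → t.2.2.2 = 1)}
  total := fun q a => ⟨wt q a, 1, rfl, fun _ => rfl⟩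

lemma mem_trans {q σ : Fin 2} {x : ℚ} {q' : Fin 2} :
    (q, σ, x, q') ∈ A.trans ↔ x = wt q σ ∧ (q = 1 → q' = 1) := Iff.rfl

lemma supVal_le {v : ℕ → ℚ} {c : ℝ} (h : ∀ n, (v n : ℝ) ≤ c) : SupVal v ≤ c := ciSup_le h

lemma le_supVal {v : ℕ → ℚ} (h : ∀ n, (v n : ℝ) ≤ 3) (n : ℕ) : (v n : ℝ) ≤ SupVal v := by
  have hb : BddAbove (Set.range fun k => ((v k : ℚ) : ℝ)) :=
    ⟨3, by rintro x ⟨k, rfl⟩; exact h k⟩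
  exact le_ciSup hb n

lemma wordVal_bdd (w : ℕ → Fin 2) :
    BddAbove {v | ∃ τ, A.RunOn w τ ∧ v = SupVal fun n => (τ n).1} := by
  refine ⟨3, ?_⟩
  rintro v ⟨τ, hτ, rfl⟩
  refine supVal_le fun n => ?_
  have := (hτ n).1
  rw [this]
  exact_mod_cast wt_le _ _

def eveSt (h : List (GkRound (Fin 2) (Fin 2) ℚ 1)) : Fin 2 :=
  (h.getLast?.map fun r => r.2.1.2).getD 0

def adamSt (h : List (GkRound (Fin 2) (Fin 2) ℚ 1)) : Fin 2 :=
  (h.getLast?.map fun r => (r.2.2 0).2).getD 0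

/-- Eve's strategy in `G_1(A)`: track Adam's token with one-step delay. -/
def strat : GkStrat (Fin 2) (Fin 2) ℚ 1 := fun h σ =>
  (wt (eveSt h) σ, if eveSt h = 1 then 1 else adamSt h)

def qE (π : ℕ → GkRound (Fin 2) (Fin 2) ℚ 1) : ℕ → Fin 2 :=
  stateAt A.init (fun n => (π n).2.1)

def qA (π : ℕ → GkRound (Fin 2) (Fin 2) ℚ 1) : ℕ → Fin 2 :=
  stateAt A.init (fun n => (π n).2.2 0)

lemma eveWins : A.EveWinsGk 1 (goodVal SupVal) := by
  refine ⟨strat, fun π hcons hAdam => ?_⟩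
  have hist_last : ∀ n, ((List.range (n+1)).map π).getLast? = some (π n) := by
    intro n; rw [List.range_succ, List.map_append]; simp
  have hE : ∀ n, eveSt ((List.range n).map π) = qE π n := by
    intro n
    cases n with
    | zero => rfl
    | succ n => rw [eveSt, hist_last]; rfl
  have hA : ∀ n, adamSt ((List.range n).map π) = qA π n := by
    intro n
    cases n with
    | zero => rfl
    | succ n => rw [adamSt, hist_last]; rfl
  have hcons' : ∀ n,
      (π n).2.1 = (wt (qE π n) ((π n).1), if qE π n = 1 then 1 else qA π n) := by
    intro n
    rw [hcons n]
    show strat _ _ = _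
    rw [strat, hE, hA]
  have hwE : ∀ n, ((π n).2.1).1 = wt (qE π n) ((π n).1) := fun n => by rw [hcons' n]
  have hqE_succ : ∀ n, qE π (n+1) = if qE π n = 1 then 1 else qA π n := by
    intro n
    show ((π n).2.1).2 = _
    rw [hcons' n]
  have hwA : ∀ n, ((π n).2.2 0).1 = wt (qA π n) ((π n).1) := fun n => (hAdam 0 n).1
  have hqA_succ : ∀ n, qA π n = 1 → qA π (n+1) = 1 := fun n h => (hAdam 0 n).2 h
  have inv : ∀ n, qE π n = 1 → qA π n = 1 := by
    intro n
    induction n with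
    | zero =>
      intro h
      rw [show qE π 0 = 0 from rfl] at h
      exact absurd h (by decide)
    | succ n ih =>
      rw [hqE_succ n]
      split_ifs with h
      · intro _; exact hqA_succ n (ih h)
      · intro h1; exact hqA_succ n h1
  have hrunE : A.RunOn (fun n => (π n).1) (fun n => (π n).2.1) := by
    intro n
    refine ⟨hwE n, fun h => ?_⟩
    have h' : qE π n = 1 := h
    show ((π n).2.1).2 = 1
    rw [hcons' n]
    show (if qE π n = 1 then (1 : Fin 2) else qA π n) = 1
    exact if_pos h'
  have bddE : ∀ n, ((((π n).2.1).1 : ℚ) : ℝ) ≤ 3 := fun n => by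
    rw [hwE n]; exact_mod_cast wt_le _ _
  refine ⟨hrunE, fun j => ?_⟩
  have hj : j = 0 := Subsingleton.elim _ _
  subst hj
  refine supVal_le fun n => ?_
  show ((((π n).2.2 0).1 : ℚ) : ℝ) ≤ SupVal fun k => ((π k).2.1).1
  rw [hwA n]
  by_cases hq : qA π n = qE π n
  · have heq : (wt (qA π n) ((π n).1) : ℝ) = ((((π n).2.1).1 : ℚ) : ℝ) := by
      rw [hwE n, hq]
    rw [heq]; exact le_supVal bddE n
  · have hA1 : qA π n = 1 := by
      rcases fin2cases (qA π n) with h | h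
      · rcases fin2cases (qE π n) with h' | h'
        · exact absurd (h.trans h'.symm) hq
        · rw [inv n h'] at h; exact absurd h (by decide)
      · exact h
    have hE0 : qE π n = 0 := by
      rcases fin2cases (qE π n) with h' | h'
      · exact h'
      · exact absurd (hA1.trans h'.symm) hq
    have hE1 : qE π (n+1) = 1 := by rw [hqE_succ n, hE0, hA1]; simp
    rcases fin2cases ((π n).1) with h0 | h1
    · have hle : (wt (qA π n) ((π n).1) : ℝ) ≤ ((((π (n+1)).2.1).1 : ℚ) : ℝ) := by
        rw [hwE (n+1), hE1, hA1, h0]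
        have h1' : wt 1 0 = 1 := by norm_num [wt]
        rw [h1']
        exact_mod_cast wt_one_ge _
      exact hle.trans (le_supVal bddE (n+1))
    · have hle : (wt (qA π n) ((π n).1) : ℝ) ≤ ((((π n).2.1).1 : ℚ) : ℝ) := by
        rw [hwE n, hA1, hE0, h1]; norm_num [wt]
      exact hle.trans (le_supVal bddE n)

def eveSt' (h : List (LRound (Fin 2) (Fin 2) ℚ)) : Fin 2 :=
  (h.getLast?.map fun r => r.2.2).getD 0

/-- Adam's move against a letter-game strategy `s`: play `b` iff Eve is in `s1`. -/
def step (s : LStrat (Fin 2) (Fin 2) ℚ) (h : List (LRound (Fin 2) (Fin 2) ℚ)) :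
    LRound (Fin 2) (Fin 2) ℚ :=
  ((if eveSt' h = 1 then 1 else 0), s h (if eveSt' h = 1 then 1 else 0))

def hist (s : LStrat (Fin 2) (Fin 2) ℚ) : ℕ → List (LRound (Fin 2) (Fin 2) ℚ)
  | 0 => []
  | n+1 => hist s n ++ [step s (hist s n)]

def play (s : LStrat (Fin 2) (Fin 2) ℚ) (n : ℕ) : LRound (Fin 2) (Fin 2) ℚ :=
  step s (hist s n)

lemma hist_eq (s : LStrat (Fin 2) (Fin 2) ℚ) :
    ∀ n, (List.range n).map (play s) = hist s n := by
  intro n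
  induction n with
  | zero => rfl
  | succ n ih => rw [List.range_succ, List.map_append, ih]; rfl

lemma notHD : ¬ A.HD SupVal := by
  rintro ⟨s, hs⟩
  have hconsist : LConsistent s (play s) := by
    intro n; rw [hist_eq]; rfl
  obtain ⟨hrun, hval⟩ := hs (play s) hconsist
  set st : ℕ → Fin 2 := stateAt A.init (fun k => (play s k).2) with hst_def
  have hst : ∀ n, eveSt' (hist s n) = st n := by
    intro n
    cases n with
    | zero => rfl
    | succ n =>
      show eveSt' (hist s n ++ [step s (hist s n)]) = _
      have hlast : (hist s n ++ [step s (hist s n)]).getLast? = some (step s (hist s n)) := by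
        simp
      rw [eveSt', hlast]
      rfl
  have hw : ∀ n, (play s n).1 = if st n = 1 then 1 else 0 := by
    intro n
    show (if eveSt' (hist s n) = 1 then (1 : Fin 2) else 0) = _
    rw [hst n]
  have hwts : ∀ n, ((play s n).2).1 = wt (st n) ((play s n).1) := fun n => (hrun n).1
  have hpers : ∀ n, st n = 1 → st (n+1) = 1 := fun n h => (hrun n).2 h
  by_cases hone : ∃ m, st m = 1
  · obtain ⟨m, hm⟩ := hone
    -- Eve's value is at most 2
    have heve : SupVal (fun n => ((play s n).2).1) ≤ 2 := by
      refine supVal_le fun n => ?_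
      rw [hwts n, hw n]
      rcases fin2cases (st n) with h0 | h1
      · rw [h0]
        norm_num [wt]
      · rw [h1]
        norm_num [wt]
    -- the run staying in s0 has value at least 3
    set τ : ℕ → ℚ × Fin 2 := fun n => (wt 0 ((play s n).1), (0 : Fin 2)) with hτdef
    have hτst : ∀ n, stateAt A.init τ n = 0 := fun n => by cases n <;> rfl
    have hτ : A.RunOn (fun n => (play s n).1) τ := by
      intro n
      refine ⟨?_, fun h => ?_⟩
      · show wt 0 ((play s n).1) = wt (stateAt A.init τ n) ((play s n).1)
        rw [hτst n]
      · have h1 : stateAt A.init τ n = (1 : Fin 2) := h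
        rw [hτst n] at h1
        exact absurd h1 (by decide)
    have h3 : (3 : ℝ) ≤ SupVal (fun n => (τ n).1) := by
      have hb : ∀ n, (((τ n).1 : ℚ) : ℝ) ≤ 3 := fun n => by
        exact_mod_cast wt_le 0 ((play s n).1)
      have := le_supVal hb m
      have hτm : (τ m).1 = 3 := by
        show wt 0 ((play s m).1) = 3
        rw [hw m, hm]
        norm_num [wt]
      rw [hτm] at this
      exact_mod_cast this
    have hword : SupVal (fun n => (τ n).1) ≤ A.wordVal SupVal (fun n => (play s n).1) :=
      le_csSup (wordVal_bdd _) ⟨τ, hτ, rfl⟩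
    linarith [hval, hword, h3, heve]
  · push_neg at hone
    have hz : ∀ n, st n = 0 := fun n => by
      rcases fin2cases (st n) with h | h
      · exact h
      · exact absurd h (hone n)
    have hw0 : ∀ n, (play s n).1 = 0 := fun n => by rw [hw n, hz n]; simp
    have heve : SupVal (fun n => ((play s n).2).1) ≤ 0 := by
      refine supVal_le fun n => ?_
      rw [hwts n, hz n, hw0 n]
      norm_num [wt]
    set τ : ℕ → ℚ × Fin 2 := fun n => (if n = 0 then (0 : ℚ) else 1, (1 : Fin 2)) with hτdef
    have hτst : ∀ n, stateAt A.init τ n = if n = 0 then 0 else 1 := fun n => by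
      cases n <;> rfl
    have hτ : A.RunOn (fun n => (play s n).1) τ := by
      intro n
      refine ⟨?_, fun _ => rfl⟩
      show (if n = 0 then (0 : ℚ) else 1) = wt (stateAt A.init τ n) ((play s n).1)
      rw [hτst n, hw0 n]
      cases n with
      | zero => norm_num [wt]
      | succ k => norm_num [wt]
    have h1 : (1 : ℝ) ≤ SupVal (fun n => (τ n).1) := by
      have hb : ∀ n, (((τ n).1 : ℚ) : ℝ) ≤ 3 := fun n => by
        show (((if n = 0 then (0 : ℚ) else 1) : ℚ) : ℝ) ≤ 3
        split_ifs <;> norm_num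
      have := le_supVal hb 1
      have hτ1 : (τ 1).1 = 1 := rfl
      rw [hτ1] at this
      exact_mod_cast this
    have hword : SupVal (fun n => (τ n).1) ≤ A.wordVal SupVal (fun n => (play s n).1) :=
      le_csSup (wordVal_bdd _) ⟨τ, hτ, rfl⟩
    linarith [hval, hword, h1, heve]

end G1Sup

/-- There is a `Sup` automaton on infinite words with two states
over a two-letter alphabet such that Eve wins the 1-token game `G_1(A)` but `A`
is not history-deterministic; hence `G_1` does not characterise
history-determinism for `Sup` automata on infinite words. -/
theorem g1_not_characterise_sup :
    ∃ A : QAut (Fin 2) (Fin 2) ℚ,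
      A.EveWinsGk 1 (QAut.goodVal SupVal) ∧ ¬ A.HD SupVal := by
  exact ⟨G1Sup.A, G1Sup.eveWins, G1Sup.notHD⟩
end

section
/- For an infinite sequence of weights in {1,...,k} read by Eve (as priorities 2x on her transitions) and two infinite sequences read by Adam (as priorities 2x−1 on his transitions), the maximum priority occurring infinitely often in the merged priority sequence is even if and only if the LimSup of Eve's weight sequence is at least the maximum of the LimSups of Adam's two weight sequences. -/
open Filter

private lemma bdd_of (f : ℕ → ℕ) (k : ℕ) (h : ∀ n, f n ≤ k) :
    IsBoundedUnder (· ≤ ·) atTop f :=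
  isBoundedUnder_of ⟨k, fun n => h n⟩

private lemma cobdd_of (f : ℕ → ℕ) : IsCoboundedUnder (· ≤ ·) atTop f := by
  have : IsBoundedUnder (· ≥ ·) atTop f := isBoundedUnder_of ⟨0, fun n => Nat.zero_le _⟩
  exact this.isCobounded_flip

private lemma ev_le_limsup (f : ℕ → ℕ) (k : ℕ) (h : ∀ n, f n ≤ k) :
    ∀ᶠ n in atTop, f n ≤ limsup f atTop := by
  have hb := bdd_of f k h
  have := eventually_lt_of_limsup_lt (u := f) (f := atTop)
    (b := limsup f atTop + 1) (by omega) hb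
  filter_upwards [this] with n hn; omega

private lemma freq_eq_limsup (f : ℕ → ℕ) (k : ℕ) (h : ∀ n, f n ≤ k) :
    ∃ᶠ n in atTop, f n = limsup f atTop := by
  have hev := ev_le_limsup f k h
  rcases Nat.eq_zero_or_pos (limsup f atTop) with h0 | h0
  · apply Eventually.frequently
    filter_upwards [hev] with n hn; omega
  · have hfreq := frequently_lt_of_lt_limsup (u := f) (f := atTop)
      (b := limsup f atTop - 1) (cobdd_of f) (by omega)
    have := hfreq.and_eventually hev
    exact this.mono (fun n hn => by omega)

private lemma freq_le_limsup (f : ℕ → ℕ) (k : ℕ) (h : ∀ n, f n ≤ k) {v : ℕ}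
    (hv : ∃ᶠ n in atTop, v ≤ f n) : v ≤ limsup f atTop :=
  le_limsup_of_frequently_le hv (bdd_of f k h)

/-- Correctness of the parity encoding of `G_2` for `LimSup`
automata. Eve's weights `x` contribute priority `2x`, each of Adam's two
weights `x` contributes priority `2x - 1`, and letter-picking moves contribute
priority `0`; the merged sequence interleaves these round by round. The maximum
priority occurring infinitely often in the merged sequence (its `limsup`) is
even iff the `LimSup` of Eve's weight sequence is at least the maximum of the
`LimSup`s of Adam's two weight sequences. -/
theorem parity_encoding_limsup (k : ℕ) (e a1 a2 : ℕ → ℕ)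
    (he : ∀ n, 1 ≤ e n ∧ e n ≤ k)
    (ha1 : ∀ n, 1 ≤ a1 n ∧ a1 n ≤ k)
    (ha2 : ∀ n, 1 ≤ a2 n ∧ a2 n ≤ k)
    (merged : ℕ → ℕ)
    (hm : ∀ n, merged (4 * n) = 0 ∧ merged (4 * n + 1) = 2 * e n ∧
      merged (4 * n + 2) = 2 * a1 n - 1 ∧ merged (4 * n + 3) = 2 * a2 n - 1) :
    Even (Filter.limsup merged Filter.atTop) ↔
      (Filter.limsup a1 Filter.atTop ≤ Filter.limsup e Filter.atTop ∧
        Filter.limsup a2 Filter.atTop ≤ Filter.limsup e Filter.atTop) := by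
  set Le := limsup e atTop with hLe
  set L1 := limsup a1 atTop with hL1
  set L2 := limsup a2 atTop with hL2
  have hmb : ∀ m, merged m ≤ 2 * k := by
    intro m
    have hd : m = 4 * (m / 4) + m % 4 := (Nat.div_add_mod m 4).symm
    have h4 : m % 4 < 4 := Nat.mod_lt _ (by norm_num)
    obtain ⟨h0, h1, h2, h3⟩ := hm (m / 4)
    have he' := he (m / 4); have ha1' := ha1 (m / 4); have ha2' := ha2 (m / 4)
    rcases (show m % 4 = 0 ∨ m % 4 = 1 ∨ m % 4 = 2 ∨ m % 4 = 3 by omega)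
      with h | h | h | h
    · rw [show m = 4 * (m / 4) by omega]; omega
    · rw [show m = 4 * (m / 4) + 1 by omega]; omega
    · rw [show m = 4 * (m / 4) + 2 by omega]; omega
    · rw [show m = 4 * (m / 4) + 3 by omega]; omega
  have hee := ev_le_limsup e k (fun n => (he n).2)
  have hea1 := ev_le_limsup a1 k (fun n => (ha1 n).2)
  have hea2 := ev_le_limsup a2 k (fun n => (ha2 n).2)
  have hfe := freq_eq_limsup e k (fun n => (he n).2)
  have hfa1 := freq_eq_limsup a1 k (fun n => (ha1 n).2)
  have hfa2 := freq_eq_limsup a2 k (fun n => (ha2 n).2)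
  have hLe1 : 1 ≤ Le := freq_le_limsup e k (fun n => (he n).2)
    (Eventually.frequently (Eventually.of_forall (fun n => (he n).1)))
  have hL11 : 1 ≤ L1 := freq_le_limsup a1 k (fun n => (ha1 n).2)
    (Eventually.frequently (Eventually.of_forall (fun n => (ha1 n).1)))
  have hL21 : 1 ≤ L2 := freq_le_limsup a2 k (fun n => (ha2 n).2)
    (Eventually.frequently (Eventually.of_forall (fun n => (ha2 n).1)))
  set L := max (2 * Le) (max (2 * L1 - 1) (2 * L2 - 1)) with hLdef
  have hub1 : 2 * Le ≤ L := le_max_left _ _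
  have hub2 : 2 * L1 - 1 ≤ L :=
    le_trans (le_max_left _ _) (le_max_right _ _)
  have hub3 : 2 * L2 - 1 ≤ L :=
    le_trans (le_max_right _ _) (le_max_right _ _)
  have hcases : L = 2 * Le ∨ L = 2 * L1 - 1 ∨ L = 2 * L2 - 1 := by
    rcases max_choice (2 * Le) (max (2 * L1 - 1) (2 * L2 - 1)) with h | h
    · exact Or.inl (hLdef.trans h)
    · rcases max_choice (2 * L1 - 1) (2 * L2 - 1) with h2 | h2
      · exact Or.inr (Or.inl (hLdef.trans (h.trans h2)))
      · exact Or.inr (Or.inr (hLdef.trans (h.trans h2)))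
  have hup : limsup merged atTop ≤ L := by
    apply limsup_le_of_le (cobdd_of merged)
    rw [eventually_atTop] at hee hea1 hea2 ⊢
    obtain ⟨N1, hN1⟩ := hee; obtain ⟨N2, hN2⟩ := hea1; obtain ⟨N3, hN3⟩ := hea2
    refine ⟨4 * (N1 + N2 + N3) + 4, fun m hmN => ?_⟩
    have hd : m = 4 * (m / 4) + m % 4 := (Nat.div_add_mod m 4).symm
    have h4 : m % 4 < 4 := Nat.mod_lt _ (by norm_num)
    have hn : N1 + N2 + N3 ≤ m / 4 := by omega
    obtain ⟨h0, h1, h2, h3⟩ := hm (m / 4)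
    have b1 := hN1 (m / 4) (by omega)
    have b2 := hN2 (m / 4) (by omega)
    have b3 := hN3 (m / 4) (by omega)
    rcases (show m % 4 = 0 ∨ m % 4 = 1 ∨ m % 4 = 2 ∨ m % 4 = 3 by omega)
      with h | h | h | h
    · rw [show m = 4 * (m / 4) by omega]; omega
    · rw [show m = 4 * (m / 4) + 1 by omega]; omega
    · rw [show m = 4 * (m / 4) + 2 by omega]; omega
    · rw [show m = 4 * (m / 4) + 3 by omega]; omega
  have hdown : L ≤ limsup merged atTop := by
    have key : ∃ᶠ m in atTop, L ≤ merged m := by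
      rw [frequently_atTop]
      intro N
      rcases hcases with hc | hc | hc
      · obtain ⟨n, hn, hne⟩ := (frequently_atTop.mp hfe) N
        refine ⟨4 * n + 1, by omega, ?_⟩
        have := (hm n).2.1
        omega
      · obtain ⟨n, hn, hne⟩ := (frequently_atTop.mp hfa1) N
        refine ⟨4 * n + 2, by omega, ?_⟩
        have := (hm n).2.2.1
        omega
      · obtain ⟨n, hn, hne⟩ := (frequently_atTop.mp hfa2) N
        refine ⟨4 * n + 3, by omega, ?_⟩
        have := (hm n).2.2.2
        omega
    exact le_limsup_of_frequently_le key (bdd_of merged (2 * k) hmb)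
  have hLval : limsup merged atTop = L := le_antisymm hup hdown
  rw [hLval, Nat.even_iff]
  rcases hcases with hc | hc | hc <;> omega
end

section
/- In the interleaved discounted-sum game encoding, with discount factors λ', λ'', λ''' ∈ ℚ ∩ (0,1) satisfying λ'·λ''·λ''' = λ and weight sequence w_0 w_1 w_2 ... where w_i = 0 for i ≢ 2 (mod 3) and w_{3i+2} = d_i, the multi-discount sum Σ_{i≥0} w_i · Π_{j<i} λ_j (with λ_j = λ', λ'', λ''' according to j mod 3) equals λ'·λ'' · Σ_{i≥0} λ^i d_i. In particular, it is nonnegative iff Σ_{i≥0} λ^i d_i is nonnegative. -/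
/-- In the interleaved discounted-sum game encoding with discount
factors `λ', λ'', λ''' ∈ ℚ ∩ (0,1)` satisfying `λ'·λ''·λ''' = λ`, and weight
sequence `w` with `w i = 0` for `i ≢ 2 (mod 3)` and `w (3i+2) = d i`, the
multi-discount sum `Σ_i w_i · Π_{j<i} λ_j` (with `λ_j = λ', λ'', λ'''`
according to `j mod 3`) equals `λ'·λ'' · Σ_i λ^i d_i`; in particular it is
nonnegative iff `Σ_i λ^i d_i` is. -/
theorem multi_discount_interleaving (l l1 l2 l3 : ℚ)
    (hl : 0 < l ∧ l < 1) (hl1 : 0 < l1 ∧ l1 < 1) (hl2 : 0 < l2 ∧ l2 < 1)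
    (hl3 : 0 < l3 ∧ l3 < 1) (hprod : l1 * l2 * l3 = l)
    (d : ℕ → ℚ) (hd : ∃ B, ∀ i, |d i| ≤ B)
    (lam : ℕ → ℚ)
    (hlam : ∀ i, lam (3 * i) = l1 ∧ lam (3 * i + 1) = l2 ∧ lam (3 * i + 2) = l3)
    (w : ℕ → ℚ)
    (hw : ∀ i, w (3 * i) = 0 ∧ w (3 * i + 1) = 0 ∧ w (3 * i + 2) = d i) :
    (∑' i, (w i : ℝ) * ∏ j ∈ Finset.range i, (lam j : ℝ)) =
        (l1 : ℝ) * (l2 : ℝ) * ∑' i, (l : ℝ) ^ i * (d i : ℝ) ∧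
      (0 ≤ ∑' i, (w i : ℝ) * ∏ j ∈ Finset.range i, (lam j : ℝ) ↔
        0 ≤ ∑' i, (l : ℝ) ^ i * (d i : ℝ)) := by
  set f : ℕ → ℝ := fun i => (w i : ℝ) * ∏ j ∈ Finset.range i, (lam j : ℝ) with hf
  -- product formula
  have hprod3 : ∀ k, ∏ j ∈ Finset.range (3 * k), (lam j : ℝ) = (l : ℝ) ^ k := by
    intro k
    induction k with
    | zero => simp
    | succ n ih =>
      have h3 : 3 * (n + 1) = 3 * n + 1 + 1 + 1 := by ring
      rw [h3, Finset.prod_range_succ, Finset.prod_range_succ, Finset.prod_range_succ, ih]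
      have h1 := (hlam n).1
      have h2 := (hlam n).2.1
      have h4 := (hlam n).2.2
      rw [h1, h2]
      have : lam (3 * n + 1 + 1) = l3 := by
        have : 3 * n + 1 + 1 = 3 * n + 2 := by ring
        rw [this, h4]
      rw [this]
      push_cast [← hprod]
      ring
  have hprodk : ∀ k, ∏ j ∈ Finset.range (3 * k + 2), (lam j : ℝ) =
      (l : ℝ) ^ k * (l1 : ℝ) * (l2 : ℝ) := by
    intro k
    rw [show 3 * k + 2 = 3 * k + 1 + 1 by ring, Finset.prod_range_succ,
      Finset.prod_range_succ, hprod3 k, (hlam k).1]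
    have : lam (3 * k + 1) = l2 := (hlam k).2.1
    rw [this]
  -- injection
  have hg : Function.Injective (fun k => 3 * k + 2) := by
    intro a b h; dsimp only at h; omega
  have hvanish : Function.support f ⊆ Set.range (fun k => 3 * k + 2) := by
    intro x hx
    by_contra hmem
    have hm : x % 3 ≠ 2 := by
      intro h
      exact hmem ⟨x / 3, by dsimp only; omega⟩
    have hw0 : w x = 0 := by
      rcases (by omega : x % 3 = 0 ∨ x % 3 = 1) with h | h
      · have : x = 3 * (x / 3) := by omega
        rw [this]; exact (hw _).1
      · have : x = 3 * (x / 3) + 1 := by omega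
        rw [this]; exact (hw _).2.1
    exact hx (by simp [hf, hw0])
  have key : (∑' k, f (3 * k + 2)) = ∑' i, f i :=
    Function.Injective.tsum_eq hg hvanish
  have hterm : ∀ k, f (3 * k + 2) = (l1 : ℝ) * (l2 : ℝ) * ((l : ℝ) ^ k * (d k : ℝ)) := by
    intro k
    simp only [hf]
    rw [(hw k).2.2, hprodk k]
    ring
  have main : (∑' i, f i) = (l1 : ℝ) * (l2 : ℝ) * ∑' i, (l : ℝ) ^ i * (d i : ℝ) := by
    rw [← key]
    simp_rw [hterm]
    exact tsum_mul_left
  refine ⟨main, ?_⟩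
  rw [main]
  have hpos : (0 : ℝ) < (l1 : ℝ) * (l2 : ℝ) := by
    have := hl1.1; have := hl2.1
    positivity
  exact mul_nonneg_iff_of_pos_left hpos
end
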